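/- arXiv:2511.01414 — 2 statements merged into one kernel-verified Lean document; each statement's English description precedes it below -/
import Mathlib

section
/- The strict order relation between computable real numbers, given via codes of their rational approximation functions, is not decidable: the halting problem reduces to deciding, given codes of computable reals α and β, whether α < β. Specifically, for each pair (e,x), the real β_{e,x} = Σ_{k∈ℕ} [∃y ≤ k, T₁(y,e,x)] · 2^{−k} is computable uniformly in (e,x), satisfies β_{e,x} > 0 iff the machine e halts on x, and β_{e,x} = 0 otherwise. -/
/-!
`β_{e,x}` is the binary number `0.b₀b₁b₂…` (scaled by `2`) whose `k`-th digit records whether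
`e` halts on `x` within `k` steps. Truncating after `N` digits and adding half of the largest
possible tail, `2^{-N}`, gives a dyadic approximation within `2^{-N}` whose numerator is odd, so
its encoding as a rational in lowest terms is computed primitively recursively from `(e, x, N)`.
A decider for `<` applied to the codes of `0` and of `β_{e,x}` would then decide the halting
problem.
-/

open Nat.Partrec (Code)

/-- `c` is a code of the computable real `α`: the partial recursive function with
code `c` is total on `ℕ`, returns (encodings of) rationals, and these rationals
approximate `α` to within `1/2^n`. -/
def IsCodeOf (c : Code) (α : ℝ) : Prop :=
  ∀ n : ℕ, ∃ q : ℚ, Encodable.encode q ∈ c.eval n ∧ |α - (q : ℝ)| < 1 / 2 ^ n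

/-- `β_{e,x} = Σ_k [machine e halts on x within k steps] · 2^{-k}`. -/
noncomputable def haltingReal (e x : ℕ) : ℝ :=
  ∑' k : ℕ,
    if (Nat.Partrec.Code.evaln k (Denumerable.ofNat Code e) x).isSome then (1 : ℝ) / 2 ^ k
    else 0

open Nat.Partrec.Code Encodable Finset

noncomputable def binaryTerm (b : ℕ → Bool) (k : ℕ) : ℝ := if b k then 1 / 2 ^ k else 0

def binaryPrefix (b : ℕ → Bool) : ℕ → ℕ
  | 0 => 0
  | N + 1 => 2 * binaryPrefix b N + (b N).toNat

section BinarySeries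

variable (b : ℕ → Bool)

lemma binaryTerm_nonneg (k : ℕ) : 0 ≤ binaryTerm b k := by
  unfold binaryTerm; split <;> positivity

lemma binaryTerm_le (k : ℕ) : binaryTerm b k ≤ (1 / 2) ^ k := by
  unfold binaryTerm; split <;> simp

lemma summable_binaryTerm : Summable (binaryTerm b) :=
  .of_nonneg_of_le (binaryTerm_nonneg b) (binaryTerm_le b) summable_geometric_two

lemma tsum_binaryTerm_pos_iff : 0 < ∑' k, binaryTerm b k ↔ ∃ k, b k := by
  refine ⟨fun hpos => ?_, fun ⟨k, hk⟩ => ?_⟩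
  · by_contra! hb
    have hzero : ∀ k, binaryTerm b k = 0 := fun k => by simp [binaryTerm, hb k]
    simp [hzero] at hpos
  · exact (summable_binaryTerm b).tsum_pos (binaryTerm_nonneg b) k (by simp [binaryTerm, hk])

lemma sum_range_binaryTerm (N : ℕ) :
    ∑ k ∈ range N, binaryTerm b k = 2 * binaryPrefix b N / 2 ^ N := by
  induction N with
  | zero => simp [binaryPrefix]
  | succ N ih =>
    rw [sum_range_succ, ih, binaryPrefix, binaryTerm]
    cases b N <;> simp [pow_succ] <;> field_simp

lemma tsum_binaryTerm_nat_add_le (N : ℕ) : ∑' k, binaryTerm b (k + N) ≤ 2 / 2 ^ N :=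
  calc ∑' k, binaryTerm b (k + N)
      ≤ ∑' k, (1 / 2 : ℝ) ^ k * (1 / 2) ^ N :=
        ((summable_nat_add_iff N).2 (summable_binaryTerm b)).tsum_le_tsum
          (fun k => pow_add (1 / 2 : ℝ) k N ▸ binaryTerm_le b (k + N))
          (summable_geometric_two.mul_right _)
    _ = 2 / 2 ^ N := by rw [tsum_mul_right, tsum_geometric_two, div_pow, one_pow, mul_one_div]

/-- The tail after `N` digits lies in `[0, 2 / 2^N]`, whose midpoint is `1 / 2^N`. -/
lemma abs_tsum_binaryTerm_sub_le (N : ℕ) :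
    |∑' k, binaryTerm b k - (2 * binaryPrefix b N + 1) / 2 ^ N| ≤ 1 / 2 ^ N := by
  rw [← (summable_binaryTerm b).sum_add_tsum_nat_add N, sum_range_binaryTerm, add_div,
    add_sub_add_left_eq_sub, abs_le]
  have htail := tsum_binaryTerm_nat_add_le b N
  have hnonneg : 0 ≤ ∑' k, binaryTerm b (k + N) := tsum_nonneg fun k => binaryTerm_nonneg b _
  constructor <;> linarith [show (2 : ℝ) / 2 ^ N = 2 * (1 / 2 ^ N) by ring]

end BinarySeries

lemma primrec₂_binaryPrefix {α : Type*} [Primcodable α] {b : α → ℕ → Bool} (hb : Primrec₂ b) :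
    Primrec₂ fun a N => binaryPrefix (b a) N := by
  have hstep : Primrec₂ fun a (p : ℕ × ℕ) => 2 * p.2 + (b a p.1).toNat :=
    Primrec.nat_add.comp (Primrec.nat_mul.comp (Primrec.const 2) (Primrec.snd.comp Primrec.snd))
      ((Primrec.cond (hb.comp Primrec.fst (Primrec.fst.comp Primrec.snd))
        (Primrec.const 1) (Primrec.const 0)).of_eq fun p => by cases b p.1 p.2.1 <;> rfl)
  refine (Primrec.nat_rec (Primrec.const 0) hstep).of_eq fun a N => ?_
  induction N with
  | zero => rfl
  | succ N ih => simp only [binaryPrefix, ← ih]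

lemma encode_odd_div_two_pow {m : ℕ} (hm : Odd m) (k : ℕ) :
    encode ((m : ℚ) / 2 ^ k) = Nat.pair (2 * m) (2 ^ k) := by
  have hpos : (0 : ℤ) < 2 ^ k := by positivity
  have hcop : (m : ℤ).natAbs.Coprime ((2 : ℤ) ^ k).natAbs := by
    simpa [Int.natAbs_pow] using hm.coprime_two_right.pow_right k
  have hq : (m : ℚ) / 2 ^ k = ((m : ℤ) : ℚ) / ((2 ^ k : ℤ) : ℚ) := by push_cast; rfl
  have hnum : ((m : ℚ) / 2 ^ k).num = m := hq ▸ Rat.num_div_eq_of_coprime hpos hcop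
  have hden : ((m : ℚ) / 2 ^ k).den = 2 ^ k := by
    exact_mod_cast hq ▸ Rat.den_div_eq_of_coprime hpos hcop
  -- `encode` sends a rational to the pair (numerator, denominator), and `(m : ℤ)` to `2 * m`
  rw [show encode ((m : ℚ) / 2 ^ k) = Nat.pair (encode ((m : ℚ) / 2 ^ k).num) ((m : ℚ) / 2 ^ k).den
    from rfl, hnum, hden]
  rfl

lemma isCodeOf_const (q : ℚ) : IsCodeOf (Code.const (encode q)) q :=
  fun n => ⟨q, by simp [eval_const], by simp⟩

lemma exists_isSome_evaln_iff_dom (c : Code) (x : ℕ) :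
    (∃ k, (evaln k c x).isSome) ↔ (c.eval x).Dom := by
  simp only [Option.isSome_iff_exists, Part.dom_iff_mem, evaln_complete]
  tauto

lemma Computable₂.exists_code_family {α : Type*} [Primcodable α] {f : α → ℕ → ℕ}
    (hf : Computable₂ f) :
    ∃ F : α → Code, Computable F ∧ ∀ a n, (F a).eval n = Part.some (f a n) := by
  obtain ⟨c, hc⟩ := exists_code.1 hf.partrec₂
  exact ⟨fun a => curry c (encode a),
    (primrec₂_curry.comp (Primrec.const c) Primrec.encode).to_comp,
    fun a n => by simp [eval_curry, hc]⟩

def haltsWithin (e x k : ℕ) : Bool := (evaln k (Denumerable.ofNat Code e) x).isSome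

lemma haltingReal_eq_tsum_binaryTerm (e x : ℕ) :
    haltingReal e x = ∑' k, binaryTerm (haltsWithin e x) k := rfl

lemma primrec₂_haltsWithin : Primrec₂ fun p : ℕ × ℕ => haltsWithin p.1 p.2 :=
  Primrec.option_isSome.comp <| primrec_evaln.comp <|
    (Primrec.snd.pair ((Primrec.ofNat Code).comp (Primrec.fst.comp Primrec.fst))).pair
      (Primrec.snd.comp Primrec.fst)

lemma haltingReal_pos_iff (e x : ℕ) :
    0 < haltingReal e x ↔ ((Denumerable.ofNat Code e).eval x).Dom := by
  rw [haltingReal_eq_tsum_binaryTerm, tsum_binaryTerm_pos_iff, ← exists_isSome_evaln_iff_dom]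
  rfl

lemma haltingReal_eq_zero_iff (e x : ℕ) :
    haltingReal e x = 0 ↔ ¬ ((Denumerable.ofNat Code e).eval x).Dom := by
  have hnonneg : 0 ≤ haltingReal e x := tsum_nonneg (binaryTerm_nonneg _)
  rw [← haltingReal_pos_iff, not_lt]
  exact ⟨le_of_eq, fun h => le_antisymm h hnonneg⟩

def haltingApprox (e x n : ℕ) : ℚ :=
  ((2 * binaryPrefix (haltsWithin e x) (n + 1) + 1 : ℕ) : ℚ) / 2 ^ (n + 1)

lemma abs_haltingReal_sub_haltingApprox_lt (e x n : ℕ) :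
    |haltingReal e x - haltingApprox e x n| < 1 / 2 ^ n := by
  have h := abs_tsum_binaryTerm_sub_le (haltsWithin e x) (n + 1)
  push_cast [haltingApprox]
  calc _ ≤ 1 / 2 ^ (n + 1) := h
    _ < 1 / 2 ^ n := by gcongr <;> norm_num

lemma primrec₂_encode_haltingApprox :
    Primrec₂ fun (p : ℕ × ℕ) n => encode (haltingApprox p.1 p.2 n) := by
  have hnum : Primrec₂ fun (p : ℕ × ℕ) n => 2 * binaryPrefix (haltsWithin p.1 p.2) (n + 1) + 1 :=
    Primrec.succ.comp <| Primrec.nat_mul.comp (Primrec.const 2) <|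
      (primrec₂_binaryPrefix primrec₂_haltsWithin).comp Primrec.fst (Primrec.succ.comp Primrec.snd)
  have hden : Primrec fun n : ℕ => 2 ^ (n + 1) :=
    (Primrec₂.unpaired'.1 Nat.Primrec.pow).comp (Primrec.const 2) Primrec.succ
  refine Primrec₂.of_eq (Primrec₂.natPair.comp₂ (Primrec.nat_mul.comp₂ (Primrec₂.const 2) hnum)
    (hden.comp₂ Primrec₂.right)) fun p n => ?_
  exact (encode_odd_div_two_pow (odd_two_mul_add_one _) _).symm

theorem exists_computable_isCodeOf_haltingReal :
    ∃ F : ℕ × ℕ → Code, Computable F ∧ ∀ e x : ℕ, IsCodeOf (F (e, x)) (haltingReal e x) := by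
  obtain ⟨F, hF, hFeval⟩ := primrec₂_encode_haltingApprox.to_comp.exists_code_family
  exact ⟨F, hF, fun e x n =>
    ⟨haltingApprox e x n, by simp [hFeval], abs_haltingReal_sub_haltingApprox_lt e x n⟩⟩

theorem strict_order_of_computable_reals_undecidable :
    (∃ F : ℕ × ℕ → Code, Computable F ∧ ∀ e x : ℕ, IsCodeOf (F (e, x)) (haltingReal e x)) ∧
      (∀ e x : ℕ,
        (0 < haltingReal e x ↔ ((Denumerable.ofNat Code e).eval x).Dom) ∧
        (haltingReal e x = 0 ↔ ¬ ((Denumerable.ofNat Code e).eval x).Dom)) ∧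
      ¬ ∃ dec : Code → Code → Bool,
        Computable₂ dec ∧
          ∀ (c₁ c₂ : Code) (α β : ℝ),
            IsCodeOf c₁ α → IsCodeOf c₂ β → (dec c₁ c₂ = true ↔ α < β) := by
  obtain ⟨F, hF, hFcode⟩ := exists_computable_isCodeOf_haltingReal
  refine ⟨⟨F, hF, hFcode⟩, fun e x => ⟨haltingReal_pos_iff e x, haltingReal_eq_zero_iff e x⟩, ?_⟩
  rintro ⟨dec, hdec, hdec_spec⟩
  let zeroCode : Code := Code.const (encode (0 : ℚ))
  refine ComputablePred.halting_problem 0 (ComputablePred.computable_iff.2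
    ⟨fun c => dec zeroCode (F (encode c, 0)), hdec.comp (Computable.const zeroCode)
      (hF.comp (Computable.encode.pair (Computable.const 0))), funext fun c => ?_⟩)
  have hdecide := hdec_spec zeroCode _ 0 _ (by simpa using isCodeOf_const 0) (hFcode (encode c) 0)
  rw [haltingReal_pos_iff, Denumerable.ofNat_encode] at hdecide
  exact propext hdecide.symm
end

section
/- Suppose Shannon's channel coding theorem holds for a DMC p with capacity C(p) > 0: for every rate 0 < R < C(p) and every δ > 0 there exists n and an (⌈2^{nR}⌉, n) block code with λ_max < δ. Then for every rational R with 0 < R < C(p) and every rational ε > 0, an exhaustive search over all block lengths n = 1, 2, … and all (⌈2^{nR}⌉, n) block codes, which tests for each code whether the (b+2)-th rational approximation of its maximum error probability is below 2^{−(b+1)} (where b is least with 2^{−b} < ε), terminates and outputs a code C with rate at least R and λ_max(C, p) < ε. -/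
/-- Assuming Shannon's channel coding theorem for a channel with capacity `Cap`,
the exhaustive search of Algorithm 2 — enumerating for each block length `n` all
`(⌈2^{nR}⌉, n)` block codes (`codes n R`) and testing whether the `(b+2)`-th
rational approximation of the maximum error probability is below `2^{-(b+1)}`,
where `b` is least with `2^{-b} < ε` — terminates, and any code passing the test
has maximum error probability below `ε` (its rate is at least `R` by membership
in `codes n R`). -/
theorem exhaustive_search_terminates_and_is_correct {CodeT : Type*}
    (codes : ℕ → ℚ → Finset CodeT)
    (lam : CodeT → ℝ) (approx : CodeT → ℕ → ℚ)
    (happrox : ∀ (C : CodeT) (k : ℕ), |lam C - (approx C k : ℝ)| < 1 / 2 ^ k)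
    (Cap : ℝ) (hCap : 0 < Cap)
    (shannon : ∀ (R : ℚ) (δ : ℝ), 0 < R → (R : ℝ) < Cap → 0 < δ →
      ∃ n : ℕ, ∃ C ∈ codes n R, lam C < δ) :
    ∀ R ε : ℚ, 0 < R → (R : ℝ) < Cap → 0 < ε →
      ∀ b : ℕ, ((1 : ℚ) / 2 ^ b < ε ∧ ∀ b' : ℕ, (1 : ℚ) / 2 ^ b' < ε → b ≤ b') →
        (∃ n : ℕ, ∃ C ∈ codes n R, approx C (b + 2) < 1 / 2 ^ (b + 1)) ∧
        (∀ n : ℕ, ∀ C ∈ codes n R,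
          approx C (b + 2) < 1 / 2 ^ (b + 1) → lam C < (ε : ℝ)) := by
  intro R ε hR hRC hε b ⟨hb, _⟩
  have hx : (0:ℝ) < 2 ^ b := by positivity
  constructor
  · obtain ⟨n, C, hC, hlam⟩ := shannon R ((1:ℝ) / 2 ^ (b + 3)) hR hRC (by positivity)
    refine ⟨n, C, hC, ?_⟩
    have h := (abs_lt.mp (happrox C (b + 2))).1
    have key : (approx C (b + 2) : ℝ) < 1 / 2 ^ (b + 1) := by
      have harith : (1:ℝ) / 2 ^ (b + 3) + 1 / 2 ^ (b + 2) < 1 / 2 ^ (b + 1) := by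
        rw [pow_add, pow_add, pow_add,
          div_add_div _ _ (by positivity) (by positivity),
          div_lt_div_iff₀ (by positivity) (by positivity)]
        nlinarith [hx]
      linarith
    rify
    exact key
  · intro n C hC htest
    have h := (abs_lt.mp (happrox C (b + 2))).2
    have htest' : (approx C (b + 2) : ℝ) < 1 / 2 ^ (b + 1) := by rify at htest; exact htest
    have hb' : (1:ℝ) / 2 ^ b < (ε : ℝ) := by rify at hb; exact hb
    have harith : (1:ℝ) / 2 ^ (b + 1) + 1 / 2 ^ (b + 2) ≤ 1 / 2 ^ b := by
      rw [pow_add, pow_add]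
      rw [div_add_div _ _ (by positivity) (by positivity), div_le_div_iff₀ (by positivity) (by positivity)]
      nlinarith [hx]
    linarith
end
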